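/- arXiv:2308.09613 — 4 statements merged into one kernel-verified Lean document; each statement's English description precedes it below -/
import Mathlib

section
/- For any weighted undirected graph G and pairwise distinct vertices s, t, v ∈ V, the minimum of the three st-MinCut values c_{st}, c_{sv}, c_{vt} is attained by at least two of them (i.e., the minimum is not uniquely attained). -/
open Finset

noncomputable def cutW {V : Type*} [Fintype V] [DecidableEq V] (w : V → V → ℝ) (S : Finset V) : ℝ :=
  ∑ i ∈ S, ∑ j ∈ Sᶜ, w i j

noncomputable def minCutVal {V : Type*} [Fintype V] [DecidableEq V] (w : V → V → ℝ) (s t : V) : ℝ :=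
  sInf {c : ℝ | ∃ S : Finset V, s ∈ S ∧ t ∉ S ∧ cutW w S = c}

noncomputable def cW {V : Type*} (w : V → V → ℝ) (A B : Finset V) : ℝ :=
  ∑ i ∈ A, ∑ j ∈ B, w i j

noncomputable def volW {V : Type*} [Fintype V] (w : V → V → ℝ) (S : Finset V) : ℝ :=
  ∑ i ∈ S, ∑ j, w i j

lemma cutSet_finite {V : Type*} [Fintype V] [DecidableEq V] (w : V → V → ℝ) (s t : V) :
    ({c : ℝ | ∃ S : Finset V, s ∈ S ∧ t ∉ S ∧ cutW w S = c}).Finite := by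
  have : {c : ℝ | ∃ S : Finset V, s ∈ S ∧ t ∉ S ∧ cutW w S = c}
      = (fun S : Finset V => cutW w S) '' Set.univ ∩
        {c : ℝ | ∃ S : Finset V, s ∈ S ∧ t ∉ S ∧ cutW w S = c} := by
    ext c
    constructor
    · rintro ⟨S, hs, ht, rfl⟩
      exact ⟨⟨S, trivial, rfl⟩, S, hs, ht, rfl⟩
    · rintro ⟨-, h⟩; exact h
  rw [this]
  exact (Set.finite_univ.image _).inter_of_left _

lemma cutSet_nonempty {V : Type*} [Fintype V] [DecidableEq V] (w : V → V → ℝ) {s t : V}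
    (hst : s ≠ t) :
    ({c : ℝ | ∃ S : Finset V, s ∈ S ∧ t ∉ S ∧ cutW w S = c}).Nonempty :=
  ⟨cutW w {s}, {s}, mem_singleton_self s, by simp [hst.symm], rfl⟩

lemma minCut_le {V : Type*} [Fintype V] [DecidableEq V] (w : V → V → ℝ) {s t : V}
    {S : Finset V} (hs : s ∈ S) (ht : t ∉ S) : minCutVal w s t ≤ cutW w S :=
  csInf_le (cutSet_finite w s t).bddBelow ⟨S, hs, ht, rfl⟩

lemma minCut_exists {V : Type*} [Fintype V] [DecidableEq V] (w : V → V → ℝ) {s t : V}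
    (hst : s ≠ t) : ∃ S : Finset V, s ∈ S ∧ t ∉ S ∧ cutW w S = minCutVal w s t :=
  (cutSet_nonempty w hst).csInf_mem (cutSet_finite w s t)

lemma cutW_compl {V : Type*} [Fintype V] [DecidableEq V] {w : V → V → ℝ}
    (hsymm : ∀ i j, w i j = w j i) (S : Finset V) : cutW w Sᶜ = cutW w S := by
  unfold cutW
  rw [compl_compl, Finset.sum_comm]
  exact Finset.sum_congr rfl fun i _ => Finset.sum_congr rfl fun j _ => hsymm j i

lemma minCut_symm {V : Type*} [Fintype V] [DecidableEq V] {w : V → V → ℝ}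
    (hsymm : ∀ i j, w i j = w j i) (s t : V) : minCutVal w s t = minCutVal w t s := by
  unfold minCutVal
  congr 1
  ext c
  constructor
  · rintro ⟨S, hs, ht, rfl⟩
    exact ⟨Sᶜ, Finset.mem_compl.2 ht, by simp [hs], cutW_compl hsymm S⟩
  · rintro ⟨S, hs, ht, rfl⟩
    exact ⟨Sᶜ, Finset.mem_compl.2 ht, by simp [hs], cutW_compl hsymm S⟩

lemma minCut_tri {V : Type*} [Fintype V] [DecidableEq V] (w : V → V → ℝ) {a b : V} (c : V)
    (hab : a ≠ b) : min (minCutVal w a c) (minCutVal w c b) ≤ minCutVal w a b := by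
  obtain ⟨S, ha, hb, hS⟩ := minCut_exists w hab
  by_cases hc : c ∈ S
  · exact le_trans (min_le_right _ _) (hS ▸ minCut_le w hc hb)
  · exact le_trans (min_le_left _ _) (hS ▸ minCut_le w ha hc)

/-- the minimum of the three pairwise MinCut values is not uniquely attained. -/
theorem stmt1 {V : Type*} [Fintype V] [DecidableEq V] (w : V → V → ℝ)
    (hnn : ∀ i j, 0 ≤ w i j) (hsymm : ∀ i j, w i j = w j i)
    (s t v : V) (hst : s ≠ t) (hsv : s ≠ v) (htv : t ≠ v) :
    ¬ ((minCutVal w s t < minCutVal w s v ∧ minCutVal w s t < minCutVal w v t) ∨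
       (minCutVal w s v < minCutVal w s t ∧ minCutVal w s v < minCutVal w v t) ∨
       (minCutVal w v t < minCutVal w s t ∧ minCutVal w v t < minCutVal w s v)) := by
  rintro (⟨h1, h2⟩ | ⟨h1, h2⟩ | ⟨h1, h2⟩)
  · have h := minCut_tri w v hst
    exact absurd h (not_le.2 (lt_min h1 h2))
  · have h := minCut_tri w t hsv
    rw [minCut_symm hsymm t v] at h
    exact absurd h (not_le.2 (lt_min h1 h2))
  · have h := minCut_tri w s htv.symm
    rw [minCut_symm hsymm v s] at h
    exact absurd h (not_le.2 (lt_min h2 h1))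
end

section
/- In the setting of crossing cuts: with A_1 = S_{st} ∩ S_{uv}, A_2 = S_{st} ∩ S_{uv}^c, A_3 = S_{st}^c ∩ S_{uv}, A_4 = S_{st}^c ∩ S_{uv}^c, where s, u ∈ A_1, v ∈ A_2, and t ∈ A_3, the total weight c_{14} of edges between A_1 and A_4 is zero, and the weight c_{24} between A_2 and A_4 equals the weight c_{34} between A_3 and A_4. -/
open Finset

section helpers
variable {V : Type*} [DecidableEq V] (w : V → V → ℝ)

lemma cW_union_left (A B C : Finset V) (h : Disjoint A B) :
    cW w (A ∪ B) C = cW w A C + cW w B C := by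
  unfold cW; exact Finset.sum_union h

lemma cW_union_right (A B C : Finset V) (h : Disjoint B C) :
    cW w A (B ∪ C) = cW w A B + cW w A C := by
  unfold cW
  rw [← Finset.sum_add_distrib]
  exact Finset.sum_congr rfl fun i _ => Finset.sum_union h

lemma cW_symm (hs : ∀ i j, w i j = w j i) (A B : Finset V) : cW w A B = cW w B A := by
  unfold cW
  rw [Finset.sum_comm]
  exact Finset.sum_congr rfl fun j _ => Finset.sum_congr rfl fun i _ => hs i j

lemma cW_nonneg (hnn : ∀ i j, 0 ≤ w i j) (A B : Finset V) : 0 ≤ cW w A B :=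
  Finset.sum_nonneg fun i _ => Finset.sum_nonneg fun j _ => hnn i j

end helpers

/-- crossing cuts, case t ∈ A₃: c₁₄ = 0 and c₂₄ = c₃₄. -/
theorem stmt3 {V : Type*} [Fintype V] [DecidableEq V] (w : V → V → ℝ)
    (hnn : ∀ i j, 0 ≤ w i j) (hsymm : ∀ i j, w i j = w j i)
    (s t u v : V) (hst : s ≠ t) (huv : u ≠ v)
    (Sst Suv : Finset V)
    (hsS : s ∈ Sst) (htS : t ∉ Sst)
    (hSstMin : ∀ T : Finset V, s ∈ T → t ∉ T → cutW w Sst ≤ cutW w T)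
    (huSst : u ∈ Sst) (hvSst : v ∈ Sst)
    (huS : u ∈ Suv) (hvS : v ∉ Suv)
    (hSuvMin : ∀ T : Finset V, u ∈ T → v ∉ T → cutW w Suv ≤ cutW w T)
    (hsA1 : s ∈ Suv) (htA3 : t ∈ Suv) :
    cW w (Sst ∩ Suv) (Sstᶜ ∩ Suvᶜ) = 0 ∧
    cW w (Sst ∩ Suvᶜ) (Sstᶜ ∩ Suvᶜ) = cW w (Sstᶜ ∩ Suv) (Sstᶜ ∩ Suvᶜ) := by
  set A1 := Sst ∩ Suv with hA1
  set A2 := Sst ∩ Suvᶜ with hA2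
  set A3 := Sstᶜ ∩ Suv with hA3
  set A4 := Sstᶜ ∩ Suvᶜ with hA4
  have d12 : Disjoint A1 A2 := by
    rw [Finset.disjoint_left]; intro a ha hb
    simp only [hA1, hA2, Finset.mem_inter, Finset.mem_compl] at ha hb; tauto
  have d34 : Disjoint A3 A4 := by
    rw [Finset.disjoint_left]; intro a ha hb
    simp only [hA3, hA4, Finset.mem_inter, Finset.mem_compl] at ha hb; tauto
  have d13 : Disjoint A1 A3 := by
    rw [Finset.disjoint_left]; intro a ha hb
    simp only [hA1, hA3, Finset.mem_inter, Finset.mem_compl] at ha hb; tauto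
  have d24 : Disjoint A2 A4 := by
    rw [Finset.disjoint_left]; intro a ha hb
    simp only [hA2, hA4, Finset.mem_inter, Finset.mem_compl] at ha hb; tauto
  have d124 : Disjoint (A1 ∪ A2) A4 := by
    rw [Finset.disjoint_left]; intro a ha hb
    simp only [hA1, hA2, hA4, Finset.mem_union, Finset.mem_inter, Finset.mem_compl] at ha hb; tauto
  have d134 : Disjoint (A1 ∪ A3) A4 := by
    rw [Finset.disjoint_left]; intro a ha hb
    simp only [hA1, hA3, hA4, Finset.mem_union, Finset.mem_inter, Finset.mem_compl] at ha hb; tauto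
  -- decompositions
  have eSst : Sst = A1 ∪ A2 := by
    ext a; simp only [hA1, hA2, Finset.mem_union, Finset.mem_inter, Finset.mem_compl]; tauto
  have eSstc : Sstᶜ = A3 ∪ A4 := by
    ext a; simp only [hA3, hA4, Finset.mem_union, Finset.mem_inter, Finset.mem_compl]; tauto
  have eSuv : Suv = A1 ∪ A3 := by
    ext a; simp only [hA1, hA3, Finset.mem_union, Finset.mem_inter, Finset.mem_compl]; tauto
  have eT1 : Sst ∪ Suvᶜ = (A1 ∪ A2) ∪ A4 := by
    ext a; simp only [hA1, hA2, hA4, Finset.mem_union, Finset.mem_inter, Finset.mem_compl]; tauto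
  have eT1c : (Sst ∪ Suvᶜ)ᶜ = A3 := by
    ext a; simp only [hA3, Finset.mem_union, Finset.mem_inter, Finset.mem_compl]; tauto
  have eT2 : Suv ∪ Sstᶜ = (A1 ∪ A3) ∪ A4 := by
    ext a; simp only [hA1, hA3, hA4, Finset.mem_union, Finset.mem_inter, Finset.mem_compl]; tauto
  have eT2c : (Suv ∪ Sstᶜ)ᶜ = A2 := by
    ext a; simp only [hA2, Finset.mem_union, Finset.mem_inter, Finset.mem_compl]; tauto
  -- express cuts
  have h1 : cutW w Sst = cW w A1 A3 + cW w A1 A4 + (cW w A2 A3 + cW w A2 A4) := by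
    show cW w Sst Sstᶜ = _
    rw [eSstc, eSst, cW_union_left w _ _ _ d12, cW_union_right w _ _ _ d34,
      cW_union_right w _ _ _ d34]
  have h2 : cutW w Suv = cW w A1 A2 + cW w A1 A4 + (cW w A3 A2 + cW w A3 A4) := by
    have eSuvc : Suvᶜ = A2 ∪ A4 := by
      ext a; simp only [hA2, hA4, Finset.mem_union, Finset.mem_inter, Finset.mem_compl]; tauto
    show cW w Suv Suvᶜ = _
    rw [eSuvc, eSuv, cW_union_left w _ _ _ d13, cW_union_right w _ _ _ d24,
      cW_union_right w _ _ _ d24]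
  have h3 : cutW w (Sst ∪ Suvᶜ) = cW w A1 A3 + cW w A2 A3 + cW w A4 A3 := by
    show cW w (Sst ∪ Suvᶜ) (Sst ∪ Suvᶜ)ᶜ = _
    rw [eT1c, eT1, cW_union_left w _ _ _ d124, cW_union_left w _ _ _ d12]
  have h4 : cutW w (Suv ∪ Sstᶜ) = cW w A1 A2 + cW w A3 A2 + cW w A4 A2 := by
    show cW w (Suv ∪ Sstᶜ) (Suv ∪ Sstᶜ)ᶜ = _
    rw [eT2c, eT2, cW_union_left w _ _ _ d134, cW_union_left w _ _ _ d13]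
  have hi1 : cutW w Sst ≤ cutW w (Sst ∪ Suvᶜ) := by
    refine hSstMin _ (Finset.mem_union_left _ hsS) ?_
    simp only [Finset.mem_union, Finset.mem_compl]
    push_neg
    exact ⟨htS, htA3⟩
  have hi2 : cutW w Suv ≤ cutW w (Suv ∪ Sstᶜ) := by
    refine hSuvMin _ (Finset.mem_union_left _ huS) ?_
    simp only [Finset.mem_union, Finset.mem_compl]
    push_neg
    exact ⟨hvS, hvSst⟩
  have s43 : cW w A4 A3 = cW w A3 A4 := cW_symm w hsymm _ _
  have s42 : cW w A4 A2 = cW w A2 A4 := cW_symm w hsymm _ _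
  have s32 : cW w A3 A2 = cW w A2 A3 := cW_symm w hsymm _ _
  have hn : 0 ≤ cW w A1 A4 := cW_nonneg w hnn _ _
  rw [h1, h3] at hi1
  rw [h2, h4] at hi2
  constructor <;> linarith
end

section
/- For any graph G with maximum degree Δ(G) ≥ 1 and minimum degree δ(G), the independence number satisfies α(G) ≤ Δ(G)·n / (Δ(G) + δ(G)), where n = |V|. -/
open Finset

/-- independence number bound α(G) ≤ Δ·n/(Δ+δ). -/
theorem stmt6 {V : Type*} [Fintype V] [DecidableEq V]
    (G : SimpleGraph V) [DecidableRel G.Adj] (hΔ : 1 ≤ G.maxDegree)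
    (I : Finset V) (hI : ∀ i ∈ I, ∀ j ∈ I, ¬ G.Adj i j) :
    (I.card : ℝ) ≤ (G.maxDegree : ℝ) * (Fintype.card V : ℝ) /
      ((G.maxDegree : ℝ) + (G.minDegree : ℝ)) := by
  classical
  have hdeg : ∀ v : V, G.degree v = ∑ j, if G.Adj v j then 1 else 0 := by
    intro v
    rw [← SimpleGraph.card_neighborFinset_eq_degree, SimpleGraph.neighborFinset_eq_filter,
      Finset.card_filter]
  -- each i ∈ I has all neighbors in Iᶜ
  have h1 : ∀ i ∈ I, G.degree i = ∑ j ∈ Iᶜ, if G.Adj i j then 1 else 0 := by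
    intro i hi
    rw [hdeg i, ← Finset.sum_add_sum_compl I]
    have : (∑ j ∈ I, if G.Adj i j then (1:ℕ) else 0) = 0 :=
      Finset.sum_eq_zero fun j hj => by simp [hI i hi j hj]
    rw [this, zero_add]
  have hlow : G.minDegree * I.card ≤ ∑ i ∈ I, ∑ j ∈ Iᶜ, if G.Adj i j then 1 else 0 := by
    calc G.minDegree * I.card = ∑ _i ∈ I, G.minDegree := by
          rw [Finset.sum_const, smul_eq_mul, mul_comm]
      _ ≤ ∑ i ∈ I, ∑ j ∈ Iᶜ, if G.Adj i j then 1 else 0 := by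
          apply Finset.sum_le_sum
          intro i hi
          rw [← h1 i hi]
          exact G.minDegree_le_degree i
  have hhigh : (∑ i ∈ I, ∑ j ∈ Iᶜ, if G.Adj i j then 1 else 0) ≤ G.maxDegree * Iᶜ.card := by
    rw [Finset.sum_comm]
    calc (∑ j ∈ Iᶜ, ∑ i ∈ I, if G.Adj i j then 1 else 0)
        ≤ ∑ j ∈ Iᶜ, G.degree j := by
          apply Finset.sum_le_sum
          intro j _
          rw [hdeg j]
          calc (∑ i ∈ I, if G.Adj i j then (1:ℕ) else 0)
              ≤ ∑ i, if G.Adj i j then 1 else 0 :=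
                Finset.sum_le_sum_of_subset (Finset.subset_univ I)
            _ = ∑ i, if G.Adj j i then 1 else 0 := by
                apply Finset.sum_congr rfl
                intro i _
                simp [G.adj_comm]
      _ ≤ ∑ _j ∈ Iᶜ, G.maxDegree :=
          Finset.sum_le_sum fun j _ => G.degree_le_maxDegree j
      _ = G.maxDegree * Iᶜ.card := by rw [Finset.sum_const, smul_eq_mul, mul_comm]
  have key : (G.maxDegree + G.minDegree) * I.card ≤ G.maxDegree * Fintype.card V := by
    have hc : I.card + Iᶜ.card = Fintype.card V := Finset.card_add_card_compl I
    calc (G.maxDegree + G.minDegree) * I.card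
        = G.maxDegree * I.card + G.minDegree * I.card := by ring
      _ ≤ G.maxDegree * I.card + G.maxDegree * Iᶜ.card := by
          exact Nat.add_le_add_left (hlow.trans hhigh) _
      _ = G.maxDegree * (I.card + Iᶜ.card) := by ring
      _ = G.maxDegree * Fintype.card V := by rw [hc]
  have hpos : (0:ℝ) < (G.maxDegree : ℝ) + (G.minDegree : ℝ) := by
    have : (1:ℝ) ≤ (G.maxDegree : ℝ) := by exact_mod_cast hΔ
    positivity
  rw [le_div_iff₀ hpos]
  have hr := (Nat.cast_le (α := ℝ)).mpr key
  push_cast at hr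
  nlinarith [hr]
end

section
/- In a graph where two vertex-disjoint subsets C_1, C_2 with s ∈ C_1 and t ∈ C_2 satisfy that the minimum internal cut of each C_i separating any two of its vertices exceeds the total weight of edges joining C_1 ∪ C_2 to the rest plus the weight between C_1 and C_2, every st-MinCut partition S_{st} satisfies C_1 ⊆ S_{st} and C_2 ⊆ V ∖ S_{st}. -/
open Finset

lemma cWpair {V : Type*} [Fintype V] [DecidableEq V] (w : V → V → ℝ) (A B : Finset V) :
    cW w A B = ∑ i, ∑ j, if i ∈ A ∧ j ∈ B then w i j else 0 := by
  unfold cW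
  have h1 : ∀ i, (∑ j, if i ∈ A ∧ j ∈ B then w i j else 0) = if i ∈ A then ∑ j ∈ B, w i j else 0 := by
    intro i
    by_cases h : i ∈ A
    · simp only [h, true_and, if_true]
      rw [Finset.sum_ite_mem, Finset.univ_inter]
    · simp [h]
  rw [Finset.sum_congr rfl fun i _ => h1 i, Finset.sum_ite_mem, Finset.univ_inter]

lemma cutWpair {V : Type*} [Fintype V] [DecidableEq V] (w : V → V → ℝ) (S : Finset V) :
    cutW w S = ∑ i, ∑ j, if i ∈ S ∧ j ∉ S then w i j else 0 := by
  have : cutW w S = cW w S Sᶜ := rfl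
  rw [this, cWpair]
  simp

lemma cWsymm {V : Type*} [Fintype V] [DecidableEq V] (w : V → V → ℝ)
    (hsymm : ∀ i j, w i j = w j i) (A B : Finset V) : cW w A B = cW w B A := by
  unfold cW
  rw [Finset.sum_comm]
  exact Finset.sum_congr rfl fun i _ => Finset.sum_congr rfl fun j _ => hsymm _ _

lemma ptwise {V : Type*} [DecidableEq V] (w : V → V → ℝ) (i j : V) (hw : 0 ≤ w i j)
    (A C₁ C₂ : Finset V) (hd : Disjoint C₁ C₂) :
    (if i ∈ (A ∪ C₁) \ C₂ ∧ j ∉ (A ∪ C₁) \ C₂ then w i j else 0)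
    + (if i ∈ C₁ ∩ A ∧ j ∈ C₁ \ A then w i j else 0)
    + (if i ∈ C₂ ∩ A ∧ j ∈ C₂ \ A then w i j else 0)
    ≤ (if i ∈ A ∧ j ∉ A then w i j else 0)
    + (if i ∈ C₁ ∧ j ∉ C₁ then w i j else 0)
    + (if i ∉ C₂ ∧ j ∈ C₂ then w i j else 0) := by
  have hdi : i ∈ C₁ → i ∉ C₂ := fun h => Finset.disjoint_left.mp hd h
  have hdj : j ∈ C₁ → j ∉ C₂ := fun h => Finset.disjoint_left.mp hd h
  simp only [Finset.mem_sdiff, Finset.mem_union, Finset.mem_inter]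
  by_cases hiA : i ∈ A <;> by_cases hjA : j ∈ A <;> by_cases hi1 : i ∈ C₁ <;>
    by_cases hj1 : j ∈ C₁ <;> by_cases hi2 : i ∈ C₂ <;> by_cases hj2 : j ∈ C₂ <;>
    simp_all <;> split_ifs <;> simp_all <;> linarith

lemma key {V : Type*} [Fintype V] [DecidableEq V] (w : V → V → ℝ)
    (hnn : ∀ i j, 0 ≤ w i j) (hsymm : ∀ i j, w i j = w j i)
    (C₁ C₂ : Finset V) (hdisj : Disjoint C₁ C₂) (A : Finset V) :
    cutW w ((A ∪ C₁) \ C₂) + cW w (C₁ ∩ A) (C₁ \ A) + cW w (C₂ ∩ A) (C₂ \ A)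
    ≤ cutW w A + cW w C₁ (univ \ C₁) + cW w C₂ (univ \ C₂) := by
  have hb2 : cW w C₂ (univ \ C₂) = ∑ i, ∑ j, if i ∉ C₂ ∧ j ∈ C₂ then w i j else 0 := by
    rw [cWsymm w hsymm, cWpair]
    refine Finset.sum_congr rfl fun i _ => Finset.sum_congr rfl fun j _ => ?_
    simp [and_comm]
  have hb1 : cW w C₁ (univ \ C₁) = ∑ i, ∑ j, if i ∈ C₁ ∧ j ∉ C₁ then w i j else 0 := by
    rw [cWpair]
    refine Finset.sum_congr rfl fun i _ => Finset.sum_congr rfl fun j _ => by simp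
  rw [hb1, hb2, cutWpair, cutWpair, cWpair, cWpair]
  simp only [← Finset.sum_add_distrib]
  refine Finset.sum_le_sum fun i _ => Finset.sum_le_sum fun j _ => ?_
  exact ptwise w i j (hnn i j) A C₁ C₂ hdisj

/-- tightly connected clusters are not split by st-MinCut partitions. -/
theorem stmt19 {V : Type*} [Fintype V] [DecidableEq V] (w : V → V → ℝ)
    (hnn : ∀ i j, 0 ≤ w i j) (hsymm : ∀ i j, w i j = w j i)
    (C₁ C₂ : Finset V) (hdisj : Disjoint C₁ C₂)
    (s t : V) (hs : s ∈ C₁) (ht : t ∈ C₂)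
    (hC₁ : ∀ S : Finset V, (C₁ ∩ S).Nonempty → (C₁ \ S).Nonempty →
      cW w (C₁ ∩ S) (C₁ \ S) > cW w C₁ (univ \ C₁) + cW w C₂ (univ \ C₂))
    (hC₂ : ∀ S : Finset V, (C₂ ∩ S).Nonempty → (C₂ \ S).Nonempty →
      cW w (C₂ ∩ S) (C₂ \ S) > cW w C₁ (univ \ C₁) + cW w C₂ (univ \ C₂))
    (Sst : Finset V) (hsS : s ∈ Sst) (htS : t ∉ Sst)
    (hminS : ∀ T : Finset V, s ∈ T → t ∉ T → cutW w Sst ≤ cutW w T) :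
    C₁ ⊆ Sst ∧ Disjoint C₂ Sst := by
  have hsB : s ∈ (Sst ∪ C₁) \ C₂ := by
    simp [Finset.mem_sdiff, Finset.mem_union, hs, Finset.disjoint_left.mp hdisj hs]
  have htB : t ∉ (Sst ∪ C₁) \ C₂ := by simp [Finset.mem_sdiff, ht]
  have hmin := hminS _ hsB htB
  have hkey := key w hnn hsymm C₁ C₂ hdisj Sst
  have hX1 : 0 ≤ cW w (C₁ ∩ Sst) (C₁ \ Sst) :=
    Finset.sum_nonneg fun i _ => Finset.sum_nonneg fun j _ => hnn i j
  have hX2 : 0 ≤ cW w (C₂ ∩ Sst) (C₂ \ Sst) :=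
    Finset.sum_nonneg fun i _ => Finset.sum_nonneg fun j _ => hnn i j
  have hXY : cW w (C₁ ∩ Sst) (C₁ \ Sst) + cW w (C₂ ∩ Sst) (C₂ \ Sst)
      ≤ cW w C₁ (univ \ C₁) + cW w C₂ (univ \ C₂) := by linarith
  constructor
  · intro x hx
    by_contra hxS
    have h := hC₁ Sst ⟨s, Finset.mem_inter.mpr ⟨hs, hsS⟩⟩ ⟨x, Finset.mem_sdiff.mpr ⟨hx, hxS⟩⟩
    linarith
  · rw [Finset.disjoint_left]
    intro x hx hxS
    have h := hC₂ Sst ⟨x, Finset.mem_inter.mpr ⟨hx, hxS⟩⟩ ⟨t, Finset.mem_sdiff.mpr ⟨ht, htS⟩⟩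
    linarith
end
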